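/- arXiv:2010.09560 — 2 statements merged into one kernel-verified Lean document; each statement's English description precedes it below -/
import Mathlib

section
/- Let α be a positive real number such that G_α is a free group of rank 2 with free basis {A, B_α}. Then every element of G_α that stabilizes the set {0, ∞} setwise is the identity. -/
/-
If `g` stabilises `{0, ∞}`, either it swaps the two points, and then `g² = -1`, so `g⁴ = 1` and
`g = 1` because free groups are torsion-free; or it fixes both, and then `g` is upper triangular,
so `g A g⁻¹` is upper unitriangular and commutes with `A`. In a free group, `w a w⁻¹` commutes
with a generator `a` only if `w` is a power of `a`: otherwise, after stripping letters `a^±1` from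
both ends of `w`, the reduced words of `(w a w⁻¹) a` and `a (w a w⁻¹)` begin with different
letters. Hence `g = Aᵏ`, and its upper right entry `k` vanishes.
-/

open Matrix OnePoint

noncomputable abbrev SL2 := Matrix.SpecialLinearGroup (Fin 2) ℝ

noncomputable def mobius (g : SL2) : OnePoint ℝ → OnePoint ℝ :=
  fun p => Option.elim p
    (if g.1 1 0 = 0 then ∞ else ((g.1 0 0 / g.1 1 0 : ℝ) : OnePoint ℝ))
    (fun x => if g.1 1 0 * x + g.1 1 1 = 0 then ∞
      else (((g.1 0 0 * x + g.1 0 1) / (g.1 1 0 * x + g.1 1 1) : ℝ) : OnePoint ℝ))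

noncomputable def matA : SL2 := ⟨!![1,1;0,1], by norm_num [Matrix.det_fin_two_of]⟩
noncomputable def matB (α : ℝ) : SL2 := ⟨!![1,0;α,1], by norm_num [Matrix.det_fin_two_of]⟩

section Conjugation

variable {G : Type*} [Group G]

theorem commute_conj_mul_left_iff {a u : G} (hu : Commute u a) (w : G) :
    Commute (u * w * a * (u * w)⁻¹) a ↔ Commute (w * a * w⁻¹) a := by
  rw [show u * w * a * (u * w)⁻¹ = u * (w * a * w⁻¹) * u⁻¹ by group]
  simpa only [hu.mul_inv_cancel] using Commute.conj_iff (a := w * a * w⁻¹) (b := a) u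

theorem commute_conj_inv_iff (w a : G) :
    Commute (w⁻¹ * a * w⁻¹⁻¹) a ↔ Commute (w * a * w⁻¹) a := by
  rw [← Commute.conj_iff w, show w * (w⁻¹ * a * w⁻¹⁻¹) * w⁻¹ = a by group]
  exact ⟨Commute.symm, Commute.symm⟩

end Conjugation

namespace FreeGroup

variable {α : Type*}

theorem isReduced_append {L₁ L₂ : List (α × Bool)} (h₁ : IsReduced L₁) (h₂ : IsReduced L₂)
    (h : ∀ x ∈ L₁.getLast?, ∀ y ∈ L₂.head?, x.1 ≠ y.1) : IsReduced (L₁ ++ L₂) :=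
  List.isChain_append.mpr ⟨h₁, h₂, fun x hx y hy hxy => absurd hxy (h x hx y hy)⟩

theorem head?_invRev (L : List (α × Bool)) :
    (invRev L).head? = L.getLast?.map fun x => (x.1, !x.2) := by
  simp [invRev, List.head?_reverse]

theorem getLast?_invRev (L : List (α × Bool)) :
    (invRev L).getLast? = L.head?.map fun x => (x.1, !x.2) := by
  simp [invRev, List.getLast?_reverse]

theorem mk_singleton_mem_zpowers (a : α) (b : Bool) : mk [(a, b)] ∈ Subgroup.zpowers (of a) := by
  cases b
  · exact Subgroup.inv_mem _ (Subgroup.mem_zpowers (of a))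
  · exact Subgroup.mem_zpowers (of a)

variable [DecidableEq α]

theorem norm_mk_lt_of_toWord_eq_cons {w : FreeGroup α} {x : α × Bool} {T : List (α × Bool)}
    (h : w.toWord = x :: T) : w = mk [x] * mk T ∧ norm (mk T) < norm w := by
  refine ⟨by rw [mul_mk, List.singleton_append, ← h, mk_toWord], ?_⟩
  calc norm (mk T) ≤ T.length := norm_mk_le
    _ < norm w := by simp [norm, h]

theorem not_commute_conj_of {a : α} {w : FreeGroup α} {x y : α × Bool}
    (hx : w.toWord.head? = Option.some x) (hy : w.toWord.getLast? = Option.some y) (hxa : x.1 ≠ a)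
    (hya : y.1 ≠ a) : ¬ Commute (w * of a * w⁻¹) (of a) := by
  have hinv : IsReduced (invRev w.toWord) := toWord_inv w ▸ isReduced_toWord
  set N := w.toWord ++ (a, true) :: invRev w.toWord
  have hN : IsReduced N :=
    isReduced_append isReduced_toWord
      (isReduced_append (L₁ := [_]) .singleton hinv (by simp [hy, Ne.symm hya]))
      (by simp [hy, hya])
  have hN_head : N.head? = Option.some x := by simp [N, List.head?_append, hx]
  have hN_last : N.getLast? = Option.some (x.1, !x.2) := by
    have : (invRev w.toWord).getLast? = Option.some (x.1, !x.2) := by rw [getLast?_invRev, hx]; rfl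
    change (w.toWord ++ ([(a, true)] ++ invRev w.toWord)).getLast? = _
    rw [List.getLast?_append, List.getLast?_append, this]
    rfl
  have hconj : w * of a * w⁻¹ = mk N := by
    conv_lhs => rw [← mk_toWord (x := w)]
    simp [N, of, inv_mk, mul_mk]
  have hright : IsReduced (N ++ [(a, true)]) :=
    isReduced_append hN .singleton (by simp [hN_last, hxa])
  have hleft : IsReduced ([(a, true)] ++ N) :=
    isReduced_append .singleton hN (by simp [hN_head, Ne.symm hxa])
  intro h
  have hwords := congrArg toWord h.eq
  rw [hconj, of, mul_mk, mul_mk, toWord_mk, toWord_mk, hright.reduce_eq, hleft.reduce_eq] at hwords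
  have hheads := congrArg List.head? hwords
  simp [List.head?_append, hN_head] at hheads
  exact hxa (congrArg Prod.fst hheads)

theorem mem_zpowers_of_commute_conj_of {a : α} {w : FreeGroup α}
    (h : Commute (w * of a * w⁻¹) (of a)) : w ∈ Subgroup.zpowers (of a) := by
  induction hn : w.norm using Nat.strong_induction_on generalizing w with
  | _ n ih =>
  have strip : ∀ v : FreeGroup α, v.norm = n → Commute (v * of a * v⁻¹) (of a) →
      ∀ b T, v.toWord = (a, b) :: T → v ∈ Subgroup.zpowers (of a) := by
    intro v hv hc b T hT
    obtain ⟨rfl, hlt⟩ := norm_mk_lt_of_toWord_eq_cons hT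
    have hu := mk_singleton_mem_zpowers a b
    obtain ⟨k, hk⟩ := Subgroup.mem_zpowers_iff.mp hu
    have hcomm : Commute (mk [(a, b)]) (of a) := hk ▸ (Commute.refl _).zpow_left k
    exact Subgroup.mul_mem _ hu
      (ih _ (hv ▸ hlt) ((commute_conj_mul_left_iff hcomm _).mp hc) rfl)
  rcases hx : w.toWord.head? with _ | ⟨x₁, x₂⟩
  · rw [List.head?_eq_none_iff, toWord_eq_nil_iff] at hx
    exact hx ▸ Subgroup.one_mem _
  obtain ⟨y, hy⟩ : ∃ y : α × Bool, w.toWord.getLast? = Option.some y := by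
    rcases hy : w.toWord.getLast? with _ | y
    · simp_all [List.getLast?_eq_none_iff]
    · exact ⟨y, rfl⟩
  by_cases hxa : x₁ = a
  · subst hxa
    obtain ⟨T, hT⟩ := List.head?_eq_some_iff.mp hx
    exact strip w hn h _ _ hT
  by_cases hya : y.1 = a
  · obtain ⟨T, hT⟩ : ∃ T, w⁻¹.toWord = (a, !y.2) :: T := by
      rw [← List.head?_eq_some_iff, toWord_inv, head?_invRev, hy, ← hya]
      rfl
    exact (Subgroup.inv_mem_iff _).mp
      (strip w⁻¹ ((norm_inv_eq (x := w)).trans hn) ((commute_conj_inv_iff w _).mpr h) _ _ hT)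
  exact absurd h (not_commute_conj_of hx hy hxa hya)

end FreeGroup

theorem mobius_zero (g : SL2) : mobius g ((0 : ℝ) : OnePoint ℝ) =
    if g 1 1 = 0 then ∞ else ((g 0 1 / g 1 1 : ℝ) : OnePoint ℝ) := by
  show (if g 1 0 * 0 + g 1 1 = 0 then ∞ else _) = _
  simp

theorem mobius_infty (g : SL2) :
    mobius g ∞ = if g 1 0 = 0 then ∞ else ((g 0 0 / g 1 0 : ℝ) : OnePoint ℝ) := rfl

theorem entries_eq_zero_of_mobius_image_zero_infty {g : SL2}
    (h : mobius g '' {((0 : ℝ) : OnePoint ℝ), ∞} = {((0 : ℝ) : OnePoint ℝ), ∞}) :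
    (g 0 1 = 0 ∧ g 1 0 = 0) ∨ (g 0 0 = 0 ∧ g 1 1 = 0) := by
  rw [Set.image_pair, Set.pair_eq_pair_iff, mobius_zero, mobius_infty] at h
  rcases h with ⟨h0, hinf⟩ | ⟨h0, hinf⟩ <;> split_ifs at h0 hinf <;> simp_all

theorem coe_matA : (matA : Matrix (Fin 2) (Fin 2) ℝ) = !![1, 1; 0, 1] := rfl

theorem matA_eq_map_T :
    matA = Matrix.SpecialLinearGroup.map (Int.castRingHom ℝ) ModularGroup.T := by
  ext i j
  rw [Matrix.SpecialLinearGroup.map_apply_coe, RingHom.mapMatrix_apply, ModularGroup.T]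
  fin_cases i <;> fin_cases j <;> simp [matA]

theorem matA_zpow_apply_zero_one (k : ℤ) : (matA ^ k) 0 1 = k := by
  simp [matA_eq_map_T, ← map_zpow, ModularGroup.coe_T_zpow]

theorem commute_conj_matA_of_apply_one_zero {g : SL2} (hg : g 1 0 = 0) :
    Commute (g * matA * g⁻¹) matA := by
  ext i j
  simp only [Matrix.SpecialLinearGroup.coe_mul, Matrix.SpecialLinearGroup.coe_inv,
    Matrix.adjugate_fin_two, coe_matA]
  fin_cases i <;> fin_cases j <;> simp [Matrix.mul_apply, Fin.sum_univ_two, hg]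
  ring

theorem pow_four_eq_one_of_apply_zero_zero {g : SL2} (h₀₀ : g 0 0 = 0) (h₁₁ : g 1 1 = 0) :
    g ^ 4 = 1 := by
  have hdet : g 0 1 * g 1 0 = -1 := by
    have := g.det_coe; rw [Matrix.det_fin_two, h₀₀, h₁₁] at this; linarith
  have hsq : (g : Matrix (Fin 2) (Fin 2) ℝ) ^ 2 = -1 := by
    rw [sq, Matrix.eta_fin_two (g : Matrix (Fin 2) (Fin 2) ℝ)]
    ext i j; fin_cases i <;> fin_cases j <;> simp [h₀₀, h₁₁] <;> linarith
  ext : 1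
  rw [Matrix.SpecialLinearGroup.coe_pow, show 4 = 2 * 2 from rfl, pow_mul, hsq]
  simp

theorem stmt4_general (α : ℝ)
    (hfree : Function.Injective
      (FreeGroup.lift (fun b : Bool => if b then matA else matB α))) :
    ∀ g ∈ Subgroup.closure ({matA, matB α} : Set SL2),
      mobius g '' {((0:ℝ) : OnePoint ℝ), ∞} = {((0:ℝ) : OnePoint ℝ), ∞} → g = 1 := by
  intro g hg hstab
  set φ := FreeGroup.lift (fun b : Bool => if b then matA else matB α)
  have hrange : Set.range (fun b : Bool => if b then matA else matB α) = {matA, matB α} := by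
    ext; simp [or_comm]
  obtain ⟨w, rfl⟩ : g ∈ φ.range := by rwa [FreeGroup.range_lift_eq_closure, hrange]
  have hφA : φ (FreeGroup.of true) = matA := by simp [φ]
  rcases entries_eq_zero_of_mobius_image_zero_infty hstab with ⟨h₀₁, h₁₀⟩ | ⟨h₀₀, h₁₁⟩
  · have hcomm := commute_conj_matA_of_apply_one_zero h₁₀
    rw [← hφA, ← map_inv, ← map_mul, ← map_mul] at hcomm
    obtain ⟨k, rfl⟩ := Subgroup.mem_zpowers_iff.mp
      (FreeGroup.mem_zpowers_of_commute_conj_of (hcomm.of_map hfree))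
    rw [map_zpow, hφA, matA_zpow_apply_zero_one, Int.cast_eq_zero] at h₀₁
    rw [h₀₁, zpow_zero, map_one]
  · have h4 := pow_four_eq_one_of_apply_zero_zero h₀₀ h₁₁
    rw [← map_pow, ← map_one φ] at h4
    rw [(pow_eq_one_iff_left four_ne_zero).mp (hfree h4), map_one]

theorem stmt4 (α : ℝ) (hα : 0 < α)
    (hfree : Function.Injective
      (FreeGroup.lift (fun b : Bool => if b then matA else matB α))) :
    ∀ g ∈ Subgroup.closure ({matA, matB α} : Set SL2),
      mobius g '' {((0:ℝ) : OnePoint ℝ), ∞} = {((0:ℝ) : OnePoint ℝ), ∞} → g = 1 :=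
  stmt4_general α hfree
end

section
/- For every n ≥ 1, the polynomial p_n(α) = (-1)^{n+1}(2u_n(α) - l_n(α)) has exactly n distinct real roots (i.e., all of its roots are real and simple). -/
open Polynomial

noncomputable def ul : ℕ → Polynomial ℤ × Polynomial ℤ
  | 0 => (0, 1)
  | n + 1 => ((ul n).1 - (ul n).2, X * (ul n).1 + (1 - X) * (ul n).2)

noncomputable def upoly (n : ℕ) : Polynomial ℤ := (ul n).1
noncomputable def lpoly (n : ℕ) : Polynomial ℤ := (ul n).2

noncomputable def ppoly (n : ℕ) : Polynomial ℤ :=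
  (-1) ^ (n + 1) * (2 * upoly n - lpoly n)

/-!
Substituting `α = 2 - 2 cos θ` linearises the recursion: `sin θ · u_n(α) = -sin nθ`, and hence
`sin θ · p_n(α) = ± (sin nθ + sin (n+1)θ)`. This vanishes at `θ_k = 2kπ/(2n+1)`, `1 ≤ k ≤ n`,
giving `n` distinct real roots `2 - 2 cos θ_k` (cosine is injective on `(0, π)`). Since `p_n` is
monic of degree `n`, these are all of its roots.
-/

open Real

@[simp] lemma upoly_zero : upoly 0 = 0 := rfl
@[simp] lemma lpoly_zero : lpoly 0 = 1 := rfl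
@[simp] lemma upoly_succ (n : ℕ) : upoly (n + 1) = upoly n - lpoly n := rfl
@[simp] lemma lpoly_succ (n : ℕ) : lpoly (n + 1) = X * upoly n + (1 - X) * lpoly n := rfl

lemma natDegree_le_and_coeff_upoly_lpoly (n : ℕ) :
    (upoly n).natDegree ≤ n ∧ (lpoly n).natDegree ≤ n ∧
      (upoly n).coeff n = 0 ∧ (lpoly n).coeff n = (-1) ^ n := by
  induction n with
  | zero => simp
  | succ n ih =>
    obtain ⟨hu, hl, hun, hln⟩ := ih
    have hu' : (upoly n).coeff (n + 1) = 0 := coeff_eq_zero_of_natDegree_lt (by omega)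
    have hl' : (lpoly n).coeff (n + 1) = 0 := coeff_eq_zero_of_natDegree_lt (by omega)
    rw [upoly_succ, lpoly_succ]
    refine ⟨?_, ?_, ?_, ?_⟩
    · exact (natDegree_sub_le _ _).trans (by omega)
    · refine (natDegree_add_le _ _).trans (max_le ?_ ?_)
      · exact natDegree_mul_le.trans (by rw [natDegree_X]; omega)
      · refine natDegree_mul_le.trans ?_
        have : (1 - X : ℤ[X]).natDegree ≤ 1 := by compute_degree
        omega
    · simp [hu', hl']
    · simp [sub_mul, coeff_X_mul, hun, hln, hl', pow_succ]

lemma natDegree_ppoly_le (n : ℕ) : (ppoly n).natDegree ≤ n := by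
  obtain ⟨hu, hl, -, -⟩ := natDegree_le_and_coeff_upoly_lpoly n
  unfold ppoly
  refine natDegree_mul_le.trans ?_
  have h2u : (2 * upoly n).natDegree ≤ n := natDegree_mul_le.trans (by simpa using hu)
  have : ((-1 : ℤ[X]) ^ (n + 1)).natDegree = 0 := by simp
  rw [this, zero_add]
  exact (natDegree_sub_le _ _).trans (max_le h2u hl)

lemma coeff_ppoly_self (n : ℕ) : (ppoly n).coeff n = 1 := by
  obtain ⟨-, -, hun, hln⟩ := natDegree_le_and_coeff_upoly_lpoly n
  have : ((-1 : ℤ[X]) ^ (n + 1)) = C ((-1) ^ (n + 1)) := by simp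
  rw [ppoly, this, coeff_C_mul, coeff_sub, coeff_ofNat_mul, hun, hln, pow_succ]
  simp [← mul_pow]

lemma ppoly_monic (n : ℕ) : (ppoly n).Monic :=
  monic_of_natDegree_le_of_coeff_eq_one n (natDegree_ppoly_le n) (coeff_ppoly_self n)

lemma sin_mul_aeval_upoly_lpoly (n : ℕ) (θ : ℝ) :
    sin θ * aeval (2 - 2 * cos θ) (upoly n) = -sin (n * θ) ∧
    sin θ * aeval (2 - 2 * cos θ) (lpoly n) = sin θ * cos (n * θ) + (cos θ - 1) * sin (n * θ) := by
  induction n with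
  | zero => simp
  | succ n ih =>
    obtain ⟨hu, hl⟩ := ih
    have hθ : ((n + 1 : ℕ) : ℝ) * θ = n * θ + θ := by push_cast; ring
    simp only [upoly_succ, lpoly_succ, map_sub, map_mul, map_add, aeval_X, map_one, hθ,
      sin_add, cos_add]
    constructor
    · linear_combination hu - hl
    · linear_combination (2 - 2 * cos θ) * hu + (2 * cos θ - 1) * hl +
        sin (n * θ) * sin_sq_add_cos_sq θ

lemma sin_mul_aeval_ppoly (n : ℕ) (θ : ℝ) :
    sin θ * aeval (2 - 2 * cos θ) (ppoly n) = (-1) ^ n * (sin (n * θ) + sin ((n + 1) * θ)) := by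
  obtain ⟨hu, hl⟩ := sin_mul_aeval_upoly_lpoly n θ
  have : sin ((n + 1) * θ) = sin (n * θ) * cos θ + cos (n * θ) * sin θ := by
    rw [add_mul, one_mul, sin_add]
  simp only [ppoly, map_mul, map_sub, map_pow, map_neg, map_one, map_ofNat]
  rw [this, pow_succ]
  linear_combination (-(-1) ^ n) * (2 * hu - hl)

noncomputable def rootAngle (n k : ℕ) : ℝ := 2 * k * π / (2 * n + 1)

noncomputable def ppolyRoot (n k : ℕ) : ℝ := 2 - 2 * cos (rootAngle n k)

lemma rootAngle_mem_Ioo {n k : ℕ} (hk : k ∈ Finset.Icc 1 n) : rootAngle n k ∈ Set.Ioo 0 π := by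
  rw [Finset.mem_Icc] at hk
  have hk1 : (1 : ℝ) ≤ k := by exact_mod_cast hk.1
  have hkn : (k : ℝ) ≤ n := by exact_mod_cast hk.2
  have hd : (0 : ℝ) < 2 * n + 1 := by positivity
  constructor
  · unfold rootAngle; positivity
  · rw [rootAngle, div_lt_iff₀ hd]; nlinarith [pi_pos]

lemma aeval_ppolyRoot {n k : ℕ} (hk : k ∈ Finset.Icc 1 n) : aeval (ppolyRoot n k) (ppoly n) = 0 := by
  obtain ⟨hpos, hlt⟩ := rootAngle_mem_Ioo hk
  have hsin : sin (rootAngle n k) ≠ 0 := (sin_pos_of_pos_of_lt_pi hpos hlt).ne'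
  have hangle : (n + 1) * rootAngle n k = -(n * rootAngle n k) + k * (2 * π) := by
    unfold rootAngle; field_simp; ring
  have := sin_mul_aeval_ppoly n (rootAngle n k)
  rw [hangle, sin_add_nat_mul_two_pi, sin_neg, add_neg_cancel, mul_zero] at this
  exact (mul_eq_zero.mp this).resolve_left hsin

lemma injOn_ppolyRoot (n : ℕ) : Set.InjOn (ppolyRoot n) (Finset.Icc 1 n) := by
  intro a ha b hb hab
  have hcos : cos (rootAngle n a) = cos (rootAngle n b) := by
    simpa [ppolyRoot] using hab
  have := injOn_cos (Set.Ioo_subset_Icc_self (rootAngle_mem_Ioo ha))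
    (Set.Ioo_subset_Icc_self (rootAngle_mem_Ioo hb)) hcos
  unfold rootAngle at this
  field_simp at this
  exact_mod_cast this

lemma eval_map_ppoly_ppolyRoot {n k : ℕ} (hk : k ∈ Finset.Icc 1 n) :
    ((ppoly n).map (Int.castRingHom ℂ)).eval (ppolyRoot n k : ℂ) = 0 := by
  rw [← algebraMap_int_eq, eval_map_algebraMap, ← Complex.coe_algebraMap, aeval_algebraMap_apply,
    aeval_ppolyRoot hk, map_zero]

theorem stmt18_general (n : ℕ) :
    ((ppoly n).map (Int.castRingHom ℂ)).roots.Nodup ∧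
    Multiset.card ((ppoly n).map (Int.castRingHom ℂ)).roots = n ∧
    ∀ z ∈ ((ppoly n).map (Int.castRingHom ℂ)).roots, ∃ x : ℝ, z = (x : ℂ) := by
  set S : Finset ℂ := (Finset.Icc 1 n).image fun k ↦ (ppolyRoot n k : ℂ)
  have hS : S.card = n := by
    rw [Finset.card_image_of_injOn fun a ha b hb h ↦
      injOn_ppolyRoot n ha hb (Complex.ofReal_injective h), Nat.card_Icc, Nat.add_sub_cancel]
  have hroots : ((ppoly n).map (Int.castRingHom ℂ)).roots = S.val := by
    refine roots_eq_of_natDegree_le_card_of_ne_zero ?_ ?_ ((ppoly_monic n).map _).ne_zero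
    · simp only [S, Finset.mem_image]
      rintro _ ⟨k, hk, rfl⟩
      exact eval_map_ppoly_ppolyRoot hk
    · exact natDegree_map_le.trans ((natDegree_ppoly_le n).trans hS.ge)
  rw [hroots]
  refine ⟨S.nodup, hS, ?_⟩
  simp only [Finset.mem_val, S, Finset.mem_image]
  rintro _ ⟨k, -, rfl⟩
  exact ⟨_, rfl⟩

theorem stmt18 (n : ℕ) (hn : 1 ≤ n) :
    ((ppoly n).map (Int.castRingHom ℂ)).roots.Nodup ∧
    Multiset.card ((ppoly n).map (Int.castRingHom ℂ)).roots = n ∧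
    ∀ z ∈ ((ppoly n).map (Int.castRingHom ℂ)).roots, ∃ x : ℝ, z = (x : ℂ) :=
  stmt18_general n
end
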